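/- The fixed-length test error exponent is upper bounded by the sequential exponent: for M ≥ 3 and any fully supported (P_N, P_A) on a finite alphabet, min over tuples Q ∈ P(X)^M with G_1(Q) ≥ G_2(Q) of [D(Q_1‖P_A) + Σ_{j=2}^M D(Q_j‖P_N)] ≤ min over Q ∈ P(X) of [D(Q‖P_A) + (M−2)D(Q‖P_N)] = D_{(M−2)/(M−1)}(P_N‖P_A). -/
import Mathlib

open Real Finset Filter

open scoped Classical

variable {X : Type*}

def IsProb [Fintype X] (P : X → ℝ) : Prop := (∀ x, 0 ≤ P x) ∧ ∑ x, P x = 1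

noncomputable def KL [Fintype X] (P Q : X → ℝ) : ℝ := ∑ x, P x * Real.log (P x / Q x)

noncomputable def GJS [Fintype X] (P Q : X → ℝ) (α : ℝ) : ℝ :=
  α * KL P (fun x => (α * P x + Q x) / (1 + α)) + KL Q (fun x => (α * P x + Q x) / (1 + α))

noncomputable def Renyi [Fintype X] (β : ℝ) (P Q : X → ℝ) : ℝ :=
  (1 / (β - 1)) * Real.log (∑ x, P x ^ β * Q x ^ (1 - β))

noncomputable def scoreG [Fintype X] {M : ℕ} (Q : Fin M → X → ℝ) (i : Fin M) : ℝ :=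
  ∑ j ∈ Finset.univ.erase i,
    KL (Q j) (fun x => (∑ l ∈ Finset.univ.erase i, Q l x) / ((M : ℝ) - 1))

lemma term_ge (p q : ℝ) (hp : 0 ≤ p) (hq : 0 < q) : p - q ≤ p * Real.log (p / q) := by
  rcases eq_or_lt_of_le hp with h | h
  · simp [← h]; linarith
  · have hlog := Real.log_le_sub_one_of_pos (show 0 < q / p from div_pos hq h)
    have hinv : Real.log (q / p) = - Real.log (p / q) := by
      rw [← Real.log_inv]; congr 1; rw [inv_div]
    rw [hinv] at hlog
    have := mul_le_mul_of_nonneg_left hlog (le_of_lt h)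
    have hpq : p * (q / p - 1) = q - p := by field_simp
    nlinarith

lemma KL_nonneg [Fintype X] {P Q : X → ℝ} (hP0 : ∀ x, 0 ≤ P x) (hP1 : ∑ x, P x = 1)
    (hQ0 : ∀ x, 0 < Q x) (hQ1 : ∑ x, Q x = 1) : 0 ≤ KL P Q := by
  have h : ∑ x, (P x - Q x) ≤ ∑ x, P x * Real.log (P x / Q x) :=
    Finset.sum_le_sum fun x _ => term_ge _ _ (hP0 x) (hQ0 x)
  rw [Finset.sum_sub_distrib, hP1, hQ1] at h
  simpa [KL] using h

lemma KL_self [Fintype X] (P : X → ℝ) : KL P P = 0 := by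
  unfold KL
  apply Finset.sum_eq_zero
  intro x _
  rcases eq_or_ne (P x) 0 with h | h
  · simp [h]
  · simp [div_self h]

lemma kl_identity [Fintype X] (PN PA V : X → ℝ) (hPN : ∀ x, 0 < PN x) (hPA : ∀ x, 0 < PA x)
    (hV0 : ∀ x, 0 ≤ V x) (hV1 : ∑ x, V x = 1) (c β Z : ℝ) (hZ : 0 < Z)
    (hβ : (c + 1) * β = c) :
    KL V PA + c * KL V PN
      = (c + 1) * KL V (fun x => PN x ^ β * PA x ^ (1 - β) / Z) + (-(c + 1)) * Real.log Z := by
  have key : ∀ x : X, V x * Real.log (V x / PA x) + c * (V x * Real.log (V x / PN x))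
      = (c + 1) * (V x * Real.log (V x / (PN x ^ β * PA x ^ (1 - β) / Z)))
        + (-(c + 1)) * Real.log Z * V x := by
    intro x
    rcases eq_or_lt_of_le (hV0 x) with h | h
    · simp [← h]
    · have hW : 0 < PN x ^ β * PA x ^ (1 - β) :=
        mul_pos (Real.rpow_pos_of_pos (hPN x) _) (Real.rpow_pos_of_pos (hPA x) _)
      rw [Real.log_div h.ne' (hPA x).ne', Real.log_div h.ne' (hPN x).ne',
          Real.log_div h.ne' (by positivity), Real.log_div hW.ne' hZ.ne',
          Real.log_mul (Real.rpow_pos_of_pos (hPN x) _).ne' (Real.rpow_pos_of_pos (hPA x) _).ne',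
          Real.log_rpow (hPN x), Real.log_rpow (hPA x)]
      linear_combination (V x * (Real.log (PN x) - Real.log (PA x))) * hβ
  have hsum := Finset.sum_congr rfl (fun x (_ : x ∈ Finset.univ) => key x)
  unfold KL
  rw [Finset.sum_add_distrib, Finset.sum_add_distrib, ← Finset.mul_sum, ← Finset.mul_sum,
      ← Finset.mul_sum, hV1, mul_one] at hsum
  exact hsum

lemma mem_A [Fintype X] {M : ℕ} (hM : 3 ≤ M) (PN PA V : X → ℝ) (hPN : IsProb PN)
    (hPNpos : ∀ x, 0 < PN x) (hV : IsProb V) (h0 : (0 : ℕ) < M) (h1 : (1 : ℕ) < M) :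
    ∃ Q : Fin M → X → ℝ, (∀ m, IsProb (Q m)) ∧
      scoreG Q ⟨1, h1⟩ ≤ scoreG Q ⟨0, h0⟩ ∧
      KL V PA + ((M : ℝ) - 2) * KL V PN
        = KL (Q ⟨0, h0⟩) PA
          + ∑ j ∈ Finset.univ.erase (⟨0, h0⟩ : Fin M), KL (Q j) PN := by
  have hm1 : (0 : ℝ) < (M : ℝ) - 1 := by
    have : (3 : ℝ) ≤ (M : ℝ) := by exact_mod_cast hM
    linarith
  set i0 : Fin M := ⟨0, h0⟩ with hi0
  set i1 : Fin M := ⟨1, h1⟩ with hi1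
  set Q : Fin M → X → ℝ := fun j => if (j : ℕ) = 1 then PN else V with hQ
  have hQProb : ∀ j, IsProb (Q j) := by
    intro j
    by_cases h : (j : ℕ) = 1 <;> simp [hQ, h, hPN, hV]
  have hQ0 : Q i0 = V := by simp [hQ, hi0]
  have hQ1 : Q i1 = PN := by simp [hQ, hi1]
  have hcast1 : ((M - 1 : ℕ) : ℝ) = (M : ℝ) - 1 := by
    rw [Nat.cast_sub (by omega)]; norm_num
  have hcard1 : (Finset.univ.erase i1).card = M - 1 := by
    rw [Finset.card_erase_of_mem (Finset.mem_univ _)]; simp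
  have hcard0 : (Finset.univ.erase i0).card = M - 1 := by
    rw [Finset.card_erase_of_mem (Finset.mem_univ _)]; simp
  -- scoreG at i1 is zero
  have havg1 : (fun x => (∑ l ∈ Finset.univ.erase i1, Q l x) / ((M : ℝ) - 1)) = V := by
    funext x
    have hsum : ∑ l ∈ Finset.univ.erase i1, Q l x = ((M - 1 : ℕ) : ℝ) * V x := by
      rw [Finset.sum_congr rfl (fun l hl => ?_), Finset.sum_const, hcard1, nsmul_eq_mul]
      have hne : (l : ℕ) ≠ 1 := fun h => (Finset.ne_of_mem_erase hl) (Fin.ext h)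
      simp [hQ, hne]
    rw [hsum, hcast1]
    field_simp
  have hscore1 : scoreG Q i1 = 0 := by
    unfold scoreG
    apply Finset.sum_eq_zero
    intro j hj
    have hne : (j : ℕ) ≠ 1 := fun h => (Finset.ne_of_mem_erase hj) (Fin.ext h)
    have hQj : Q j = V := by simp [hQ, hne]
    rw [hQj, havg1, KL_self]
  -- scoreG at i0 is nonneg
  have hmem10 : i1 ∈ Finset.univ.erase i0 := by
    refine Finset.mem_erase.2 ⟨?_, Finset.mem_univ _⟩
    intro h
    have := congrArg Fin.val h
    simp [hi0, hi1] at this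
  have hg0pos : ∀ x, 0 < (∑ l ∈ Finset.univ.erase i0, Q l x) / ((M : ℝ) - 1) := by
    intro x
    apply div_pos _ hm1
    refine Finset.sum_pos' (fun l _ => (hQProb l).1 x) ⟨i1, hmem10, ?_⟩
    rw [hQ1]; exact hPNpos x
  have hg0sum : ∑ x, (∑ l ∈ Finset.univ.erase i0, Q l x) / ((M : ℝ) - 1) = 1 := by
    rw [← Finset.sum_div, Finset.sum_comm]
    rw [Finset.sum_congr rfl (fun l (_ : l ∈ Finset.univ.erase i0) => (hQProb l).2),
        Finset.sum_const, hcard0, nsmul_eq_mul, mul_one, hcast1, div_self hm1.ne']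
  have hscore0 : 0 ≤ scoreG Q i0 := by
    unfold scoreG
    apply Finset.sum_nonneg
    intro j _
    exact KL_nonneg (hQProb j).1 (hQProb j).2 hg0pos hg0sum
  -- value
  have hval : ∑ j ∈ Finset.univ.erase i0, KL (Q j) PN = ((M : ℝ) - 2) * KL V PN := by
    rw [← Finset.add_sum_erase _ _ hmem10, hQ1, KL_self, zero_add]
    have hcard2 : ((Finset.univ.erase i0).erase i1).card = M - 2 := by
      rw [Finset.card_erase_of_mem hmem10, hcard0]
      omega
    have hall : ∀ j ∈ (Finset.univ.erase i0).erase i1, KL (Q j) PN = KL V PN := by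
      intro j hj
      have hne : (j : ℕ) ≠ 1 := fun h => (Finset.ne_of_mem_erase hj) (Fin.ext h)
      simp [hQ, hne]
    rw [Finset.sum_congr rfl hall, Finset.sum_const, hcard2, nsmul_eq_mul,
        Nat.cast_sub (by omega)]
    norm_num
  exact ⟨Q, hQProb, hscore1 ▸ hscore0, by rw [hQ0, hval]⟩

theorem fixed_exponent_le_seq_exponent [Fintype X] {M : ℕ} (hM : 3 ≤ M)
    (PN PA : X → ℝ) (hPN : IsProb PN) (hPA : IsProb PA)
    (hPNpos : ∀ x, 0 < PN x) (hPApos : ∀ x, 0 < PA x) :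
    sInf {v : ℝ | ∃ Q : Fin M → X → ℝ, (∀ m, IsProb (Q m)) ∧
        scoreG Q ⟨1, by omega⟩ ≤ scoreG Q ⟨0, by omega⟩ ∧
        v = KL (Q ⟨0, by omega⟩) PA
          + ∑ j ∈ Finset.univ.erase (⟨0, by omega⟩ : Fin M), KL (Q j) PN}
      ≤ sInf {v : ℝ | ∃ V : X → ℝ, IsProb V ∧ v = KL V PA + ((M : ℝ) - 2) * KL V PN} ∧
    sInf {v : ℝ | ∃ V : X → ℝ, IsProb V ∧ v = KL V PA + ((M : ℝ) - 2) * KL V PN}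
      = Renyi (((M : ℝ) - 2) / ((M : ℝ) - 1)) PN PA := by
  have hXne : Nonempty X := by
    by_contra h
    rw [not_nonempty_iff] at h
    have := hPN.2
    simp at this
  have hm3 : (3 : ℝ) ≤ (M : ℝ) := by exact_mod_cast hM
  have hm1 : (0 : ℝ) < (M : ℝ) - 1 := by linarith
  set c : ℝ := (M : ℝ) - 2 with hc
  set β : ℝ := c / ((M : ℝ) - 1) with hβdef
  have hc1 : c + 1 = (M : ℝ) - 1 := by rw [hc]; ring
  have hβ : (c + 1) * β = c := by
    rw [hc1, hβdef]
    field_simp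
  set Z : ℝ := ∑ x, PN x ^ β * PA x ^ (1 - β) with hZdef
  have hZ : 0 < Z := by
    apply Finset.sum_pos
    · exact fun x _ => mul_pos (Real.rpow_pos_of_pos (hPNpos x) _)
        (Real.rpow_pos_of_pos (hPApos x) _)
    · exact Finset.univ_nonempty
  set Vs : X → ℝ := fun x => PN x ^ β * PA x ^ (1 - β) / Z with hVs
  have hVspos : ∀ x, 0 < Vs x := fun x => div_pos
    (mul_pos (Real.rpow_pos_of_pos (hPNpos x) _) (Real.rpow_pos_of_pos (hPApos x) _)) hZ
  have hVsProb : IsProb Vs := by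
    constructor
    · exact fun x => (hVspos x).le
    · rw [hVs, ← Finset.sum_div, ← hZdef, div_self hZ.ne']
  set R : ℝ := (-(c + 1)) * Real.log Z with hR
  set B : Set ℝ := {v : ℝ | ∃ V : X → ℝ, IsProb V ∧ v = KL V PA + c * KL V PN} with hB
  have hlb : ∀ v ∈ B, R ≤ v := by
    rintro v ⟨V, hV, rfl⟩
    have hid := kl_identity PN PA V hPNpos hPApos hV.1 hV.2 c β Z hZ hβ
    have hKLnn : 0 ≤ KL V Vs := KL_nonneg hV.1 hV.2 hVspos hVsProb.2
    have hcpos : 0 < c + 1 := by rw [hc1]; exact hm1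
    rw [hid, hR]
    nlinarith
  have hmemR : R ∈ B := by
    refine ⟨Vs, hVsProb, ?_⟩
    have hid := kl_identity PN PA Vs hPNpos hPApos hVsProb.1 hVsProb.2 c β Z hZ hβ
    rw [hid]
    rw [show (fun x => PN x ^ β * PA x ^ (1 - β) / Z) = Vs from rfl, KL_self, mul_zero, zero_add,
        hR]
  have hInfB : sInf B = R :=
    le_antisymm (csInf_le ⟨R, hlb⟩ hmemR) (le_csInf ⟨R, hmemR⟩ hlb)
  constructor
  · apply csInf_le_csInf
    · refine ⟨0, ?_⟩
      rintro v ⟨Q, hQProb, _, rfl⟩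
      have h1 : 0 ≤ KL (Q ⟨0, by omega⟩) PA :=
        KL_nonneg (hQProb _).1 (hQProb _).2 hPApos hPA.2
      have h2 : 0 ≤ ∑ j ∈ Finset.univ.erase (⟨0, by omega⟩ : Fin M), KL (Q j) PN :=
        Finset.sum_nonneg fun j _ => KL_nonneg (hQProb j).1 (hQProb j).2 hPNpos hPN.2
      linarith
    · exact ⟨R, hmemR⟩
    · rintro v ⟨V, hV, rfl⟩
      obtain ⟨Q, hQ1, hQ2, hQ3⟩ :=
        mem_A hM PN PA V hPN hPNpos hV (by omega) (by omega)
      exact ⟨Q, hQ1, hQ2, hQ3⟩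
  · rw [hInfB, hR]
    simp only [Renyi]
    rw [← hZdef]
    congr 1
    have hβ1 : β - 1 = -(1 / ((M : ℝ) - 1)) := by
      rw [hβdef, hc]
      field_simp
      ring
    rw [hβ1, hc1]
    field_simp
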